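/- Let O(Q₂) = {g ∈ GL₆(ℤ) : Q₂(g·v) = Q₂(v) for all v ∈ ℤ⁶} and let T₁ = {v ∈ ℤ⁶ : Q₂(v) ∈ 2ℤ} be the even sublattice. Every g ∈ O(Q₂) maps T₁ onto T₁, and the restriction map g ↦ g|_{T₁} is a group isomorphism from O(Q₂) onto the group of all ℤ-module automorphisms h of T₁ satisfying B₂(h(v), h(w)) = B₂(v,w) for all v, w ∈ T₁. In particular, every isometry of the even sublattice T₁ extends uniquely to an isometry of (ℤ⁶, Q₂). -/

import Mathlib

/-- The quadratic form `Q₂(x) = x₁² + x₂² − x₃² − x₄² − x₅² − x₆²` on `ℤ⁶`. -/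
def Q2 (v : Fin 6 → ℤ) : ℤ :=
  v 0 ^ 2 + v 1 ^ 2 - v 2 ^ 2 - v 3 ^ 2 - v 4 ^ 2 - v 5 ^ 2

/-- The bilinear form `B₂` on `ℤ⁶`. -/
def B2 (v w : Fin 6 → ℤ) : ℤ :=
  v 0 * w 0 + v 1 * w 1 - v 2 * w 2 - v 3 * w 3 - v 4 * w 4 - v 5 * w 5

/-- `O(Q₂)`, the subgroup of `GL₆(ℤ)` preserving `Q₂`. -/
def OQ2 : Subgroup (Matrix (Fin 6) (Fin 6) ℤ)ˣ where
  carrier := {g | ∀ v, Q2 ((g : Matrix (Fin 6) (Fin 6) ℤ).mulVec v) = Q2 v}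
  one_mem' := by intro v; simp
  mul_mem' := by
    intro a b ha hb v
    rw [Units.val_mul, ← Matrix.mulVec_mulVec]
    rw [ha, hb]
  inv_mem' := by
    intro a ha v
    have h1 : (a : Matrix (Fin 6) (Fin 6) ℤ).mulVec
        ((↑a⁻¹ : Matrix (Fin 6) (Fin 6) ℤ).mulVec v) = v := by
      rw [Matrix.mulVec_mulVec, ← Units.val_mul, mul_inv_cancel, Units.val_one,
        Matrix.one_mulVec]
    have := ha ((↑a⁻¹ : Matrix (Fin 6) (Fin 6) ℤ).mulVec v)
    rw [h1] at this
    exact this.symm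

/-- The even sublattice `T₁ = {v ∈ ℤ⁶ : Q₂(v) ∈ 2ℤ}`, as a `ℤ`-submodule. -/
def T1 : Submodule ℤ (Fin 6 → ℤ) where
  carrier := {v | ∃ n : ℤ, Q2 v = 2 * n}
  zero_mem' := ⟨0, by simp [Q2]⟩
  add_mem' := by
    rintro a b ⟨m, hm⟩ ⟨n, hn⟩
    exact ⟨m + n + B2 a b, by
      simp only [Q2, B2, Pi.add_apply] at *
      linear_combination hm + hn⟩
  smul_mem' := by
    rintro c a ⟨n, hn⟩
    exact ⟨c ^ 2 * n, by
      simp only [Q2, Pi.smul_apply, smul_eq_mul] at *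
      linear_combination (c ^ 2) * hn⟩

/-- The group of `ℤ`-module automorphisms of `T₁` preserving `B₂`. -/
def IsomT1 : Subgroup (T1 ≃ₗ[ℤ] T1) where
  carrier := {h | ∀ v w : T1, B2 (h v) (h w) = B2 v w}
  one_mem' := by intro v w; rfl
  mul_mem' := by
    intro a b ha hb v w
    have h : ∀ x : T1, (a * b) x = a (b x) := fun _ => rfl
    rw [h v, h w, ha, hb]
  inv_mem' := by
    intro a ha v w
    have h : ∀ x : T1, a (a⁻¹ x) = x := fun x => a.apply_symm_apply x
    calc B2 (a⁻¹ v) (a⁻¹ w) = B2 (a (a⁻¹ v)) (a (a⁻¹ w)) := (ha _ _).symm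
      _ = B2 v w := by rw [h v, h w]

/-!
Since `2 • v ∈ T1` for every `v`, an element of `O(Q₂)` is determined by its restriction
to `T1`. Conversely, inside `T1` the sublattice `2ℤ⁶` is cut out by isometry-invariant
conditions: `B₂(t, T1) ⊆ 2ℤ` and `4 ∣ Q₂(t)` (the vectors with all coordinates odd also pair
evenly with `T1`, but have `Q₂ ≡ 2 mod 4`). So an isometry `h` of `T1` maps `2ℤ⁶` into itself
and `v ↦ h(2v)/2` is an isometry of `ℤ⁶` extending `h`.
-/

open Matrix

def LinearMap.divOfDvd {M ι : Type*} [AddCommGroup M] [Module ℤ M] (n : ℤ)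
    (φ : M →ₗ[ℤ] ι → ℤ) (hφ : ∀ x i, n ∣ φ x i) : M →ₗ[ℤ] ι → ℤ where
  toFun x i := φ x i / n
  map_add' x y := by ext i; simp [Int.add_ediv_of_dvd_left (hφ x i)]
  map_smul' c x := by ext i; simp [Int.mul_ediv_assoc c (hφ x i)]

lemma LinearMap.smul_divOfDvd {M ι : Type*} [AddCommGroup M] [Module ℤ M] (n : ℤ)
    (φ : M →ₗ[ℤ] ι → ℤ) (hφ : ∀ x i, n ∣ φ x i) (x : M) : n • divOfDvd n φ hφ x = φ x :=
  funext fun i => Int.mul_ediv_cancel' (hφ x i)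

lemma exists_units_mulVec_eq {n R : Type*} [Fintype n] [DecidableEq n] [CommRing R]
    (e : (n → R) ≃ₗ[R] n → R) : ∃ g : (Matrix n n R)ˣ, ∀ v, (g : Matrix n n R) *ᵥ v = e v :=
  ⟨GeneralLinearGroup.toLin.symm ((LinearMap.GeneralLinearGroup.generalLinearEquiv R _).symm e),
    fun v => by
      rw [← mulVecLin_apply, ← GeneralLinearGroup.coe_toLin, MulEquiv.apply_symm_apply]
      rfl⟩

lemma Q2_eq_B2_self (v : Fin 6 → ℤ) : Q2 v = B2 v v := by
  simp only [Q2, B2]; ring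

lemma Q2_add (v w : Fin 6 → ℤ) : Q2 (v + w) = Q2 v + 2 * B2 v w + Q2 w := by
  simp only [Q2, B2, Pi.add_apply]; ring

lemma Q2_smul (c : ℤ) (v : Fin 6 → ℤ) : Q2 (c • v) = c ^ 2 * Q2 v := by
  simp only [Q2, Pi.smul_apply, smul_eq_mul]; ring

lemma B2_smul_left (c : ℤ) (v w : Fin 6 → ℤ) : B2 (c • v) w = c * B2 v w := by
  simp only [B2, Pi.smul_apply, smul_eq_mul]; ring

lemma mem_T1_iff (v : Fin 6 → ℤ) : v ∈ T1 ↔ 2 ∣ Q2 v := Iff.rfl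

lemma two_smul_mem_T1 (v : Fin 6 → ℤ) : (2 : ℤ) • v ∈ T1 :=
  ⟨2 * Q2 v, by rw [Q2_smul]; ring⟩

lemma single_zero_add_single_mem_T1 (i : Fin 6) (hi : i ≠ 0) :
    Pi.single 0 1 + Pi.single i 1 ∈ T1 := by
  rw [mem_T1_iff]
  fin_cases i <;> simp_all [Q2]

lemma mulVec_mem_T1 (g : OQ2) {v : Fin 6 → ℤ} (hv : v ∈ T1) :
    ((g : (Matrix (Fin 6) (Fin 6) ℤ)ˣ) : Matrix (Fin 6) (Fin 6) ℤ) *ᵥ v ∈ T1 := by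
  rw [mem_T1_iff, g.2 v]
  exact hv

def restrictT1 : OQ2 →* (T1 ≃ₗ[ℤ] T1) where
  toFun g := LinearEquiv.ofLinearMap
    ((mulVecLin g.1.1).restrict fun _ => mulVec_mem_T1 g)
    ((mulVecLin g⁻¹.1.1).restrict fun _ => mulVec_mem_T1 g⁻¹)
    (LinearMap.ext fun t => Subtype.ext <| by
      change g.1.1 *ᵥ (g.1⁻¹.1 *ᵥ t) = t
      rw [mulVec_mulVec, Units.mul_inv, one_mulVec])
    (LinearMap.ext fun t => Subtype.ext <| by
      change g.1⁻¹.1 *ᵥ (g.1.1 *ᵥ t) = t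
      rw [mulVec_mulVec, Units.inv_mul, one_mulVec])
  map_one' := LinearEquiv.ext fun t => Subtype.ext <| one_mulVec (t : Fin 6 → ℤ)
  map_mul' g k := LinearEquiv.ext fun t => Subtype.ext <|
    (mulVec_mulVec (t : Fin 6 → ℤ) g.1.1 k.1.1).symm

lemma coe_restrictT1_apply (g : OQ2) (t : T1) :
    (restrictT1 g t : Fin 6 → ℤ) =
      ((g : (Matrix (Fin 6) (Fin 6) ℤ)ˣ) : Matrix (Fin 6) (Fin 6) ℤ) *ᵥ t :=
  rfl

lemma B2_mulVec (g : OQ2) (v w : Fin 6 → ℤ) :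
    B2 (((g : (Matrix (Fin 6) (Fin 6) ℤ)ˣ) : Matrix (Fin 6) (Fin 6) ℤ) *ᵥ v)
      (((g : (Matrix (Fin 6) (Fin 6) ℤ)ˣ) : Matrix (Fin 6) (Fin 6) ℤ) *ᵥ w) = B2 v w := by
  have hsum := g.2 (v + w)
  rw [mulVec_add, Q2_add, Q2_add, g.2 v, g.2 w] at hsum
  linarith

lemma eq_of_mulVec_eq_on_T1 {A B : Matrix (Fin 6) (Fin 6) ℤ}
    (hAB : ∀ t ∈ T1, A *ᵥ t = B *ᵥ t) : A = B := by
  refine toLin'.injective <| LinearMap.ext fun v => ?_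
  apply smul_right_injective (Fin 6 → ℤ) (two_ne_zero (α := ℤ))
  simp only [toLin'_apply, ← mulVec_smul, hAB _ (two_smul_mem_T1 v)]

lemma restrictT1_injective : Function.Injective restrictT1 := by
  refine (injective_iff_map_eq_one _).2 fun g hg => Subtype.ext <| Units.ext ?_
  refine eq_of_mulVec_eq_on_T1 fun t ht => ?_
  rw [← coe_restrictT1_apply g ⟨t, ht⟩, ← coe_restrictT1_apply 1 ⟨t, ht⟩, hg, map_one]

lemma Q2_emod_four_of_odd {t : Fin 6 → ℤ} (ht : ∀ i, Odd (t i)) : Q2 t % 4 = 2 := by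
  have h0 := Int.sq_mod_four_eq_one_of_odd (ht 0)
  have h1 := Int.sq_mod_four_eq_one_of_odd (ht 1)
  have h2 := Int.sq_mod_four_eq_one_of_odd (ht 2)
  have h3 := Int.sq_mod_four_eq_one_of_odd (ht 3)
  have h4 := Int.sq_mod_four_eq_one_of_odd (ht 4)
  have h5 := Int.sq_mod_four_eq_one_of_odd (ht 5)
  simp only [Q2]
  generalize t 0 ^ 2 = a0, t 1 ^ 2 = a1, t 2 ^ 2 = a2, t 3 ^ 2 = a3, t 4 ^ 2 = a4,
    t 5 ^ 2 = a5 at *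
  omega

lemma two_dvd_of_forall_two_dvd_B2 {t : Fin 6 → ℤ} (hB : ∀ s ∈ T1, 2 ∣ B2 t s)
    (hQ : 4 ∣ Q2 t) (i : Fin 6) : 2 ∣ t i := by
  have hpair (j : Fin 6) (hj : j ≠ 0) := hB _ (single_zero_add_single_mem_T1 j hj)
  have h1 : 2 ∣ t 0 + t 1 := by simpa [B2] using hpair 1 (by decide)
  have h2 : 2 ∣ t 0 - t 2 := by simpa [B2] using hpair 2 (by decide)
  have h3 : 2 ∣ t 0 - t 3 := by simpa [B2] using hpair 3 (by decide)
  have h4 : 2 ∣ t 0 - t 4 := by simpa [B2] using hpair 4 (by decide)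
  have h5 : 2 ∣ t 0 - t 5 := by simpa [B2] using hpair 5 (by decide)
  by_cases h0 : 2 ∣ t 0
  · fin_cases i <;> simp only [Fin.zero_eta, Fin.mk_one, Fin.reduceFinMk] <;> omega
  · have hodd : ∀ j, Odd (t j) := by
      intro j
      rw [Int.odd_iff]
      fin_cases j <;> simp only [Fin.zero_eta, Fin.mk_one, Fin.reduceFinMk] <;> omega
    have := Q2_emod_four_of_odd hodd
    omega

lemma Q2_apply_of_mem_IsomT1 {h : T1 ≃ₗ[ℤ] T1} (hh : h ∈ IsomT1) (t : T1) :
    Q2 (h t) = Q2 t := by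
  rw [Q2_eq_B2_self, hh, ← Q2_eq_B2_self]

lemma two_dvd_apply_two_smul_of_mem_IsomT1 {h : T1 ≃ₗ[ℤ] T1} (hh : h ∈ IsomT1)
    (u : Fin 6 → ℤ) (i : Fin 6) : 2 ∣ (h ⟨(2 : ℤ) • u, two_smul_mem_T1 u⟩ : Fin 6 → ℤ) i := by
  apply two_dvd_of_forall_two_dvd_B2
  · intro s hs
    have hpull := hh ⟨_, two_smul_mem_T1 u⟩ (h.symm ⟨s, hs⟩)
    rw [h.apply_symm_apply] at hpull
    rw [hpull, B2_smul_left]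
    exact dvd_mul_right 2 _
  · rw [Q2_apply_of_mem_IsomT1 hh, Q2_smul]
    exact ⟨Q2 u, by ring⟩

def twoSMulT1 : (Fin 6 → ℤ) →ₗ[ℤ] T1 where
  toFun v := ⟨(2 : ℤ) • v, two_smul_mem_T1 v⟩
  map_add' v w := Subtype.ext (smul_add 2 v w)
  map_smul' c v := Subtype.ext (smul_comm 2 c v)

def extendT1 {h : T1 ≃ₗ[ℤ] T1} (hh : h ∈ IsomT1) : (Fin 6 → ℤ) →ₗ[ℤ] Fin 6 → ℤ :=
  LinearMap.divOfDvd 2 (T1.subtype ∘ₗ h.toLinearMap ∘ₗ twoSMulT1)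
    (two_dvd_apply_two_smul_of_mem_IsomT1 hh)

section extendT1

variable {h : T1 ≃ₗ[ℤ] T1} (hh : h ∈ IsomT1)

lemma two_smul_extendT1 (v : Fin 6 → ℤ) :
    (2 : ℤ) • extendT1 hh v = h ⟨(2 : ℤ) • v, two_smul_mem_T1 v⟩ :=
  LinearMap.smul_divOfDvd _ _ _ v

lemma extendT1_coe (t : T1) : extendT1 hh t = h t := by
  apply smul_right_injective (Fin 6 → ℤ) (two_ne_zero (α := ℤ))
  have h2t : (⟨(2 : ℤ) • (t : Fin 6 → ℤ), two_smul_mem_T1 t⟩ : T1) = (2 : ℤ) • t := rfl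
  simp only [two_smul_extendT1, h2t, map_smul, SetLike.val_smul]

lemma Q2_extendT1 (v : Fin 6 → ℤ) : Q2 (extendT1 hh v) = Q2 v := by
  have hsq : (2 : ℤ) ^ 2 * Q2 (extendT1 hh v) = 2 ^ 2 * Q2 v := by
    rw [← Q2_smul, ← Q2_smul, two_smul_extendT1, Q2_apply_of_mem_IsomT1 hh]
  linarith

lemma extendT1_extendT1 {k : T1 ≃ₗ[ℤ] T1} (hk : k ∈ IsomT1) (hhk : ∀ t, h (k t) = t)
    (v : Fin 6 → ℤ) : extendT1 hh (extendT1 hk v) = v := by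
  apply smul_right_injective (Fin 6 → ℤ) (two_ne_zero (α := ℤ))
  dsimp only
  rw [← map_smul, two_smul_extendT1 hk, extendT1_coe hh, hhk]

end extendT1

def extendT1Equiv {h : T1 ≃ₗ[ℤ] T1} (hh : h ∈ IsomT1) : (Fin 6 → ℤ) ≃ₗ[ℤ] Fin 6 → ℤ :=
  have hh' : h.symm ∈ IsomT1 := IsomT1.inv_mem hh
  LinearEquiv.ofLinearMap (extendT1 hh) (extendT1 hh')
    (LinearMap.ext <| extendT1_extendT1 hh hh' h.apply_symm_apply)
    (LinearMap.ext <| extendT1_extendT1 hh' hh h.symm_apply_apply)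

lemma range_restrictT1 : restrictT1.range = IsomT1 := by
  ext h
  constructor
  · rintro ⟨g, rfl⟩ v w
    exact B2_mulVec g v w
  · intro hh
    obtain ⟨g, hg⟩ := exists_units_mulVec_eq (extendT1Equiv hh)
    have hgO : g ∈ OQ2 := fun v => (congrArg Q2 (hg v)).trans (Q2_extendT1 hh v)
    exact ⟨⟨g, hgO⟩, LinearEquiv.ext fun t => Subtype.ext <| (hg t).trans (extendT1_coe hh t)⟩

/-- Every `g ∈ O(Q₂)` maps `T₁` onto `T₁`, and restriction to `T₁` is a group
isomorphism from `O(Q₂)` onto the group of isometries of `(T₁, B₂)`; in particular every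
isometry of `T₁` extends uniquely to an isometry of `(ℤ⁶, Q₂)`. -/
theorem restriction_to_even_sublattice_is_iso :
    (∀ g : OQ2, ∀ v : Fin 6 → ℤ, v ∈ T1 →
      ((g : (Matrix (Fin 6) (Fin 6) ℤ)ˣ) : Matrix (Fin 6) (Fin 6) ℤ).mulVec v ∈ T1) ∧
    ∃ Φ : OQ2 →* (T1 ≃ₗ[ℤ] T1),
      (∀ (g : OQ2) (v : T1), ((Φ g) v : Fin 6 → ℤ) =
        ((g : (Matrix (Fin 6) (Fin 6) ℤ)ˣ) : Matrix (Fin 6) (Fin 6) ℤ).mulVec v) ∧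
      Function.Injective Φ ∧
      Φ.range = IsomT1 :=
  ⟨fun g _ hv => mulVec_mem_T1 g hv, restrictT1, coe_restrictT1_apply, restrictT1_injective,
    range_restrictT1⟩
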